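/- Fix 0 < ε < δ. Let I be an interval and φ : I → ℝ with ⟨φ²⟩_K - ⟨φ⟩_K² ≤ ε² for all subintervals K ⊂ I. Then there exists a splitting of I into two adjacent subintervals I₋, I₊, with α_± = |I_±|/|I|, such that the straight segment [x^{I₋}, x^{I₊}] joining the points x^{I₋} = (⟨φ⟩_{I₋}, ⟨φ²⟩_{I₋}) and x^{I₊} = (⟨φ⟩_{I₊}, ⟨φ²⟩_{I₊}) lies entirely in Ω_δ = {x : x₁² ≤ x₂ ≤ x₁²+δ²}, and the splitting ratios α_± are bounded away from 0 and 1 by constants depending only on ε and δ. -/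
import Mathlib


open MeasureTheory

/-- Average of `f` over the interval `[a,b]`. -/
noncomputable def iavg (a b : ℝ) (f : ℝ → ℝ) : ℝ := (b - a)⁻¹ * ∫ t in a..b, f t

lemma intervalIntegrable_subinterval {f : ℝ → ℝ} {a b p q : ℝ}
    (h : IntervalIntegrable f volume a b) (hab : a ≤ b) (hpq : p ≤ q)
    (hp : a ≤ p) (hq : q ≤ b) : IntervalIntegrable f volume p q := by
  apply h.mono_set
  rw [Set.uIcc_of_le hab, Set.uIcc_of_le hpq]
  exact Set.Icc_subset_Icc hp hq

lemma iavg_sq_nonneg {φ : ℝ → ℝ} {p q : ℝ} (hpq : p < q)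
    (h1 : IntervalIntegrable φ volume p q)
    (h2 : IntervalIntegrable (fun t => (φ t) ^ 2) volume p q) :
    (iavg p q φ) ^ 2 ≤ iavg p q (fun t => (φ t) ^ 2) := by
  have hq : (0:ℝ) < q - p := by linarith
  set u := iavg p q φ with hu
  have hint : ∫ t in p..q, φ t = (q - p) * u := by
    rw [hu, iavg, ← mul_assoc, mul_inv_cancel₀ hq.ne', one_mul]
  have key : 0 ≤ ∫ t in p..q, ((φ t - u) ^ 2) :=
    intervalIntegral.integral_nonneg hpq.le (fun t _ => sq_nonneg _)
  have expand : ∫ t in p..q, ((φ t - u) ^ 2)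
      = (∫ t in p..q, (φ t) ^ 2) - (2 * u) * ((q - p) * u) + (q - p) * u ^ 2 := by
    have e1 : ∀ t ∈ Set.uIcc p q, (φ t - u) ^ 2 = (φ t) ^ 2 - (2 * u) * φ t + u ^ 2 := by
      intro t _; ring
    rw [intervalIntegral.integral_congr e1,
        intervalIntegral.integral_add (h2.sub (h1.const_mul (2 * u)))
          intervalIntegrable_const,
        intervalIntegral.integral_sub h2 (h1.const_mul (2 * u)),
        intervalIntegral.integral_const_mul, hint, intervalIntegral.integral_const]
    simp [smul_eq_mul]
  rw [expand] at key
  have h3 : (q - p) * u ^ 2 ≤ ∫ t in p..q, (φ t) ^ 2 := by nlinarith [key]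
  have h4 := mul_le_mul_of_nonneg_left h3 (inv_nonneg.mpr hq.le)
  rw [← mul_assoc, inv_mul_cancel₀ hq.ne', one_mul] at h4
  exact h4

lemma iavg_split {φ : ℝ → ℝ} {a m b : ℝ} (h1 : a < m) (h2 : m < b)
    (ha : IntervalIntegrable φ volume a m) (hb : IntervalIntegrable φ volume m b) :
    (b - a) * iavg a b φ = (m - a) * iavg a m φ + (b - m) * iavg m b φ := by
  rw [iavg, iavg, iavg,
      ← mul_assoc, mul_inv_cancel₀ (ne_of_gt (by linarith : (0:ℝ) < b - a)), one_mul,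
      ← mul_assoc, mul_inv_cancel₀ (ne_of_gt (by linarith : (0:ℝ) < m - a)), one_mul,
      ← mul_assoc, mul_inv_cancel₀ (ne_of_gt (by linarith : (0:ℝ) < b - m)), one_mul]
  exact (intervalIntegral.integral_add_adjacent_intervals ha hb).symm

set_option maxHeartbeats 1000000 in
theorem splitting_lemma (ε δ : ℝ) (hε : 0 < ε) (hεδ : ε < δ) :
    ∃ c : ℝ, 0 < c ∧ c ≤ 1 / 2 ∧
      ∀ a b : ℝ, a < b → ∀ φ : ℝ → ℝ,
        IntervalIntegrable φ volume a b →
        IntervalIntegrable (fun t => (φ t) ^ 2) volume a b →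
        (∀ p q : ℝ, a ≤ p → p < q → q ≤ b →
          iavg p q (fun t => (φ t) ^ 2) - (iavg p q φ) ^ 2 ≤ ε ^ 2) →
        ∃ m : ℝ, a < m ∧ m < b ∧
          c ≤ (b - m) / (b - a) ∧ (b - m) / (b - a) ≤ 1 - c ∧
          ∀ t : ℝ, 0 ≤ t → t ≤ 1 →
            let x₁ : ℝ := t * iavg m b φ + (1 - t) * iavg a m φ
            let x₂ : ℝ := t * iavg m b (fun s => (φ s) ^ 2) +
              (1 - t) * iavg a m (fun s => (φ s) ^ 2)
            x₁ ^ 2 ≤ x₂ ∧ x₂ ≤ x₁ ^ 2 + δ ^ 2 := by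
  have hδ : 0 < δ := hε.trans hεδ
  have hε2 : ε ^ 2 < δ ^ 2 := by nlinarith
  set r := Real.sqrt (δ ^ 2 - ε ^ 2) with hrdef
  have hr2 : r ^ 2 = δ ^ 2 - ε ^ 2 := Real.sq_sqrt (by linarith)
  have hr0 : 0 < r := Real.sqrt_pos.mpr (by linarith)
  have hrδ : r < δ := by
    refine lt_of_pow_lt_pow_left₀ 2 hδ.le ?_
    rw [hr2]; nlinarith
  have hδr : (0:ℝ) < δ + r := by linarith
  set c := r / (δ + r) with hcdef
  have hc0 : 0 < c := div_pos hr0 hδr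
  have hc2 : c < 1 / 2 := by rw [hcdef, div_lt_iff₀ hδr]; linarith
  have hcc : c * (δ + r) = r := by rw [hcdef, div_mul_cancel₀ _ hδr.ne']
  refine ⟨c, hc0, by linarith, ?_⟩
  intro a b hab φ hφ hφ2 hosc
  have hL : (0:ℝ) < b - a := by linarith
  have hsub : ∀ p q : ℝ, a ≤ p → p ≤ q → q ≤ b → IntervalIntegrable φ volume p q :=
    fun p q hp hpq hq => intervalIntegrable_subinterval hφ hab.le hpq hp hq
  have hsub2 : ∀ p q : ℝ, a ≤ p → p ≤ q → q ≤ b →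
      IntervalIntegrable (fun t => (φ t) ^ 2) volume p q :=
    fun p q hp hpq hq => intervalIntegrable_subinterval hφ2 hab.le hpq hp hq
  -- oscillation bounds on the two halves
  have hoscL : ∀ m, a < m → m < b →
      0 ≤ iavg a m (fun t => (φ t) ^ 2) - (iavg a m φ) ^ 2 ∧
      iavg a m (fun t => (φ t) ^ 2) - (iavg a m φ) ^ 2 ≤ ε ^ 2 := by
    intro m hm1 hm2
    refine ⟨?_, hosc a m le_rfl hm1 hm2.le⟩
    have := iavg_sq_nonneg hm1 (hsub a m le_rfl hm1.le hm2.le)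
      (hsub2 a m le_rfl hm1.le hm2.le)
    linarith
  have hoscR : ∀ m, a < m → m < b →
      0 ≤ iavg m b (fun t => (φ t) ^ 2) - (iavg m b φ) ^ 2 ∧
      iavg m b (fun t => (φ t) ^ 2) - (iavg m b φ) ^ 2 ≤ ε ^ 2 := by
    intro m hm1 hm2
    refine ⟨?_, hosc m b hm1.le hm2 le_rfl⟩
    have := iavg_sq_nonneg hm2 (hsub m b hm1.le hm2.le le_rfl)
      (hsub2 m b hm1.le hm2.le le_rfl)
    linarith
  -- whole interval oscillation decomposed
  have hW : ∀ m, a < m → m < b →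
      (m - a) * (b - m) * (iavg m b φ - iavg a m φ) ^ 2
        + (b - a) * (m - a) * (iavg a m (fun t => (φ t) ^ 2) - (iavg a m φ) ^ 2)
        + (b - a) * (b - m) * (iavg m b (fun t => (φ t) ^ 2) - (iavg m b φ) ^ 2)
      ≤ (b - a) ^ 2 * ε ^ 2 := by
    intro m hm1 hm2
    have s1 := iavg_split hm1 hm2 (hsub a m le_rfl hm1.le hm2.le)
      (hsub m b hm1.le hm2.le le_rfl)
    have s2 := iavg_split hm1 hm2 (hsub2 a m le_rfl hm1.le hm2.le)
      (hsub2 m b hm1.le hm2.le le_rfl)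
    have h0 : (b - a) ^ 2 * (iavg a b (fun t => (φ t) ^ 2) - (iavg a b φ) ^ 2)
        ≤ (b - a) ^ 2 * ε ^ 2 :=
      mul_le_mul_of_nonneg_left (hosc a b le_rfl hab le_rfl) (by positivity)
    have hid : (m - a) * (b - m) * (iavg m b φ - iavg a m φ) ^ 2
        + (b - a) * (m - a) * (iavg a m (fun t => (φ t) ^ 2) - (iavg a m φ) ^ 2)
        + (b - a) * (b - m) * (iavg m b (fun t => (φ t) ^ 2) - (iavg m b φ) ^ 2)
        = (b - a) ^ 2 * (iavg a b (fun t => (φ t) ^ 2) - (iavg a b φ) ^ 2) := by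
      linear_combination ((b - a) * iavg a b φ + (m - a) * iavg a m φ
        + (b - m) * iavg m b φ) * s1 - (b - a) * s2
    linarith
  -- the IVT function
  set m₁ := a + c * (b - a) with hm₁def
  set m₂ := b - c * (b - a) with hm₂def
  have hcL : 0 < c * (b - a) := mul_pos hc0 hL
  have ham₁ : a < m₁ := by rw [hm₁def]; linarith
  have hm₂b : m₂ < b := by rw [hm₂def]; linarith
  have hm₁₂ : m₁ < m₂ := by
    have h2 : c * (b - a) < (1 / 2) * (b - a) := mul_lt_mul_of_pos_right hc2 hL
    rw [hm₁def, hm₂def]; linarith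
  set g : ℝ → ℝ := fun m =>
    (m - a) * Real.sqrt (δ ^ 2 - (iavg a m (fun t => (φ t) ^ 2) - (iavg a m φ) ^ 2))
      - (b - m) * Real.sqrt (δ ^ 2 - (iavg m b (fun t => (φ t) ^ 2) - (iavg m b φ) ^ 2))
    with hgdef
  -- bounds on g at arbitrary interior points
  have hgbnd : ∀ m, a < m → m < b →
      g m ≤ (m - a) * δ - (b - m) * r ∧ (m - a) * r - (b - m) * δ ≤ g m := by
    intro m hm1 hm2
    obtain ⟨hAL0, hALε⟩ := hoscL m hm1 hm2
    obtain ⟨hAR0, hARε⟩ := hoscR m hm1 hm2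
    set BL := Real.sqrt (δ ^ 2 - (iavg a m (fun t => (φ t) ^ 2) - (iavg a m φ) ^ 2))
    set BR := Real.sqrt (δ ^ 2 - (iavg m b (fun t => (φ t) ^ 2) - (iavg m b φ) ^ 2))
    have hBLle : BL ≤ δ :=
      (Real.sqrt_le_sqrt (by linarith)).trans_eq (Real.sqrt_sq hδ.le)
    have hBRle : BR ≤ δ :=
      (Real.sqrt_le_sqrt (by linarith)).trans_eq (Real.sqrt_sq hδ.le)
    have hBLge : r ≤ BL := by rw [hrdef]; exact Real.sqrt_le_sqrt (by linarith)
    have hBRge : r ≤ BR := by rw [hrdef]; exact Real.sqrt_le_sqrt (by linarith)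
    have hgm : g m = (m - a) * BL - (b - m) * BR := by rw [hgdef]
    constructor
    · rw [hgm]
      have e1 : (m - a) * BL ≤ (m - a) * δ :=
        mul_le_mul_of_nonneg_left hBLle (by linarith)
      have e2 : (b - m) * r ≤ (b - m) * BR :=
        mul_le_mul_of_nonneg_left hBRge (by linarith)
      linarith
    · rw [hgm]
      have e1 : (m - a) * r ≤ (m - a) * BL :=
        mul_le_mul_of_nonneg_left hBLge (by linarith)
      have e2 : (b - m) * BR ≤ (b - m) * δ :=
        mul_le_mul_of_nonneg_left hBRle (by linarith)
      linarith
  have hgm₁ : g m₁ ≤ 0 := by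
    have h := (hgbnd m₁ ham₁ (hm₁₂.trans hm₂b)).1
    have h2 : (m₁ - a) * δ - (b - m₁) * r = 0 := by
      rw [hm₁def]; linear_combination (b - a) * hcc
    linarith
  have hgm₂ : 0 ≤ g m₂ := by
    have h := (hgbnd m₂ (ham₁.trans hm₁₂) hm₂b).2
    have h2 : (m₂ - a) * r - (b - m₂) * δ = 0 := by
      rw [hm₂def]; linear_combination (-(b - a)) * hcc
    linarith
  -- continuity of g on [m₁, m₂]
  have hIccsub : Set.Icc m₁ m₂ ⊆ Set.Icc a b := Set.Icc_subset_Icc ham₁.le hm₂b.le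
  have hFc : ContinuousOn (fun x => ∫ t in a..x, φ t) (Set.Icc a b) := by
    have := intervalIntegral.continuousOn_primitive_interval' hφ Set.left_mem_uIcc
    rwa [Set.uIcc_of_le hab.le] at this
  have hF2c : ContinuousOn (fun x => ∫ t in a..x, (φ t) ^ 2) (Set.Icc a b) := by
    have := intervalIntegral.continuousOn_primitive_interval' hφ2 Set.left_mem_uIcc
    rwa [Set.uIcc_of_le hab.le] at this
  have hne₁ : ∀ x ∈ Set.Icc m₁ m₂, x - a ≠ 0 := by
    intro x hx
    have := hx.1
    have : a < x := lt_of_lt_of_le ham₁ hx.1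
    exact ne_of_gt (by linarith)
  have hne₂ : ∀ x ∈ Set.Icc m₁ m₂, b - x ≠ 0 := by
    intro x hx
    have : x < b := lt_of_le_of_lt hx.2 hm₂b
    exact ne_of_gt (by linarith)
  have hcu : ContinuousOn (fun m => iavg a m φ) (Set.Icc m₁ m₂) := by
    have : ContinuousOn (fun m => (m - a)⁻¹ * ∫ t in a..m, φ t) (Set.Icc m₁ m₂) :=
      (((continuous_sub_right a).continuousOn).inv₀ hne₁).mul (hFc.mono hIccsub)
    exact this
  have hcp : ContinuousOn (fun m => iavg a m (fun t => (φ t) ^ 2)) (Set.Icc m₁ m₂) := by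
    have : ContinuousOn (fun m => (m - a)⁻¹ * ∫ t in a..m, (φ t) ^ 2) (Set.Icc m₁ m₂) :=
      (((continuous_sub_right a).continuousOn).inv₀ hne₁).mul (hF2c.mono hIccsub)
    exact this
  have hvm : ∀ m ∈ Set.Icc m₁ m₂,
      iavg m b φ = (b - m)⁻¹ * ((∫ t in a..b, φ t) - ∫ t in a..m, φ t) := by
    intro m hm
    have h1 : a ≤ m := le_trans ham₁.le hm.1
    have h2 : m ≤ b := le_trans hm.2 hm₂b.le
    have hadd := intervalIntegral.integral_add_adjacent_intervals
      (hsub a m le_rfl h1 h2) (hsub m b h1 h2 le_rfl)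
    rw [iavg]
    congr 1
    linarith
  have hqm : ∀ m ∈ Set.Icc m₁ m₂,
      iavg m b (fun t => (φ t) ^ 2)
        = (b - m)⁻¹ * ((∫ t in a..b, (φ t) ^ 2) - ∫ t in a..m, (φ t) ^ 2) := by
    intro m hm
    have h1 : a ≤ m := le_trans ham₁.le hm.1
    have h2 : m ≤ b := le_trans hm.2 hm₂b.le
    have hadd := intervalIntegral.integral_add_adjacent_intervals
      (hsub2 a m le_rfl h1 h2) (hsub2 m b h1 h2 le_rfl)
    rw [iavg]
    congr 1
    linarith
  have hcv : ContinuousOn (fun m => iavg m b φ) (Set.Icc m₁ m₂) := by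
    refine ContinuousOn.congr ?_ hvm
    exact (((continuous_const.sub continuous_id).continuousOn).inv₀ hne₂).mul
      (continuousOn_const.sub (hFc.mono hIccsub))
  have hcq : ContinuousOn (fun m => iavg m b (fun t => (φ t) ^ 2)) (Set.Icc m₁ m₂) := by
    refine ContinuousOn.congr ?_ hqm
    exact (((continuous_const.sub continuous_id).continuousOn).inv₀ hne₂).mul
      (continuousOn_const.sub (hF2c.mono hIccsub))
  have hcg : ContinuousOn g (Set.Icc m₁ m₂) := by
    rw [hgdef]
    apply ContinuousOn.sub
    · exact ((continuous_sub_right a).continuousOn).mul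
        (Real.continuous_sqrt.comp_continuousOn
          (continuousOn_const.sub (hcp.sub (hcu.pow 2))))
    · exact ((continuous_const.sub continuous_id).continuousOn).mul
        (Real.continuous_sqrt.comp_continuousOn
          (continuousOn_const.sub (hcq.sub (hcv.pow 2))))
  -- pick m by IVT
  have hEx : ∃ m ∈ Set.Icc m₁ m₂, (g m) ^ 2 ≤ ((b - a) * r) ^ 2 := by
    by_cases hcase : -((b - a) * r) ≤ g m₁
    · exact ⟨m₁, Set.left_mem_Icc.mpr hm₁₂.le,
        sq_le_sq' hcase (le_trans hgm₁ (by positivity))⟩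
    · push_neg at hcase
      have hmem : -((b - a) * r) ∈ Set.Icc (g m₁) (g m₂) :=
        ⟨hcase.le, le_trans (neg_nonpos_of_nonneg (by positivity)) hgm₂⟩
      obtain ⟨m, hm, hgm⟩ := intermediate_value_Icc hm₁₂.le hcg hmem
      exact ⟨m, hm, by rw [hgm, neg_sq]⟩
  obtain ⟨m, hmm, hgsq⟩ := hEx
  have hm1 : a < m := lt_of_lt_of_le ham₁ hmm.1
  have hm2 : m < b := lt_of_le_of_lt hmm.2 hm₂b
  rw [hgdef] at hgsq
  simp only at hgsq
  obtain ⟨hAL0, hALε⟩ := hoscL m hm1 hm2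
  obtain ⟨hAR0, hARε⟩ := hoscR m hm1 hm2
  have hWm := hW m hm1 hm2
  refine ⟨m, hm1, hm2, ?_, ?_, ?_⟩
  · rw [le_div_iff₀ hL]
    have := hmm.2
    rw [hm₂def] at this
    linarith
  · rw [div_le_iff₀ hL]
    have := hmm.1
    rw [hm₁def] at this
    linarith
  · intro t ht0 ht1
    set U := iavg a m φ with hU
    set V := iavg m b φ with hV
    set P := iavg a m (fun t => (φ t) ^ 2) with hP
    set Q := iavg m b (fun t => (φ t) ^ 2) with hQ
    set BL := Real.sqrt (δ ^ 2 - (P - U ^ 2)) with hBLdef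
    set BR := Real.sqrt (δ ^ 2 - (Q - V ^ 2)) with hBRdef
    have hBL2 : BL ^ 2 = δ ^ 2 - (P - U ^ 2) := Real.sq_sqrt (by linarith)
    have hBR2 : BR ^ 2 = δ ^ 2 - (Q - V ^ 2) := Real.sq_sqrt (by linarith)
    clear_value U V P Q BL BR
    have hΔ : (V - U) ^ 2 ≤ (BL + BR) ^ 2 := by
      have e1 : (m - a) * (b - m) * (BL + BR) ^ 2
          = (b - a) * ((m - a) * BL ^ 2 + (b - m) * BR ^ 2)
            - ((m - a) * BL - (b - m) * BR) ^ 2 := by ring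
      have e2 : (b - a) * ((m - a) * BL ^ 2 + (b - m) * BR ^ 2)
          = (b - a) ^ 2 * δ ^ 2 - (b - a) * (m - a) * (P - U ^ 2)
            - (b - a) * (b - m) * (Q - V ^ 2) := by
        rw [hBL2, hBR2]; ring
      have e3 : ((b - a) * r) ^ 2 = (b - a) ^ 2 * δ ^ 2 - (b - a) ^ 2 * ε ^ 2 := by
        rw [mul_pow, hr2]; ring
      have h9 : (m - a) * (b - m) * (V - U) ^ 2
          ≤ (m - a) * (b - m) * (BL + BR) ^ 2 := by
        linarith only [hWm, hgsq, e1, e2, e3]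
      exact le_of_mul_le_mul_left h9 (mul_pos (by linarith) (by linarith))
    have hgoal1 : (t * V + (1 - t) * U) ^ 2 ≤ t * Q + (1 - t) * P := by
      linarith only [mul_nonneg ht0 hAR0, mul_nonneg (by linarith : (0:ℝ) ≤ 1 - t) hAL0,
        mul_nonneg (mul_nonneg ht0 (by linarith : (0:ℝ) ≤ 1 - t)) (sq_nonneg (V - U))]
    have hgoal2 : t * Q + (1 - t) * P ≤ (t * V + (1 - t) * U) ^ 2 + δ ^ 2 := by
      have htt : (0:ℝ) ≤ t * (1 - t) := mul_nonneg ht0 (by linarith)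
      have h5 : t * (1 - t) * (V - U) ^ 2 ≤ t * (1 - t) * (BL + BR) ^ 2 :=
        mul_le_mul_of_nonneg_left hΔ htt
      have hA : t * (Q - V ^ 2) = t * (δ ^ 2 - BR ^ 2) := by rw [hBR2]; ring
      have hB : (1 - t) * (P - U ^ 2) = (1 - t) * (δ ^ 2 - BL ^ 2) := by rw [hBL2]; ring
      linarith only [hA, hB, h5, sq_nonneg (t * BR - (1 - t) * BL)]
    exact ⟨hgoal1, hgoal2⟩
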